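/- arXiv:2507.15434 — 6 statements merged into one kernel-verified Lean document; each statement's English description precedes it below -/
import Mathlib

section
/- Let σ be a schedule of a BAF instance (J, M, p, c) in which every machine is fully utilized, i.e., Σ_{j ∈ σ⁻¹(i)} p_j ≥ c_i for every i ∈ M. Then T(σ) = Σ_{j ∈ J} p_j, and consequently T(σ) ≤ T(σ') for every schedule σ', i.e., σ is optimal. -/
open Finset

/-- Total working time of a BAF schedule: each machine `i ∈ M` works for
`max (load of i) (capacity of i)`, where the load is the total processing
time of jobs in `J` assigned to `i` by `σ`. -/
noncomputable def totalTime {α β : Type*} [DecidableEq β] (J : Finset α) (M : Finset β)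
    (σ : α → β) (p : α → ℝ) (c : β → ℝ) : ℝ :=
  ∑ i ∈ M, max (∑ j ∈ J.filter (fun j => σ j = i), p j) (c i)

/-- If every machine is fully utilized in σ, then the total working time equals
the total processing time, and σ is optimal. -/
theorem stmt1 {α β : Type*} [DecidableEq β] (J : Finset α) (M : Finset β)
    (hJ : J.Nonempty) (hM : M.Nonempty)
    (p : α → ℝ) (c : β → ℝ)
    (hp : ∀ j ∈ J, 0 < p j) (hc : ∀ i ∈ M, 0 < c i)
    (σ : α → β) (hσ : ∀ j ∈ J, σ j ∈ M)
    (hfull : ∀ i ∈ M, c i ≤ ∑ j ∈ J.filter (fun j => σ j = i), p j) :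
    totalTime J M σ p c = ∑ j ∈ J, p j ∧
      ∀ σ' : α → β, (∀ j ∈ J, σ' j ∈ M) → totalTime J M σ p c ≤ totalTime J M σ' p c := by
  have key : ∀ τ : α → β, (∀ j ∈ J, τ j ∈ M) →
      ∑ i ∈ M, ∑ j ∈ J.filter (fun j => τ j = i), p j = ∑ j ∈ J, p j := by
    intro τ hτ
    exact Finset.sum_fiberwise_of_maps_to hτ p
  have heq : totalTime J M σ p c = ∑ j ∈ J, p j := by
    rw [totalTime, ← key σ hσ]
    refine Finset.sum_congr rfl fun i hi => max_eq_left (hfull i hi)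
  refine ⟨heq, fun σ' hσ' => ?_⟩
  rw [heq, ← key σ' hσ']
  exact Finset.sum_le_sum fun i hi => le_max_left _ _
end

section
/- Let (J, M, p, c) be a BAF instance, let M = M_a ∪ M_b be a partition of the machines, and let σ and σ' be two schedules such that (i) σ⁻¹(i) = σ'⁻¹(i) for every i ∈ M_a, and (ii) T(σ, i) < 2·c_i for every i ∈ M_b. Then T(σ) ≤ (3/2)·T(σ'). -/
open Finset

/-- Core of the FFD 3/2-approximation: if σ agrees with σ' on the machines of
Mₐ and every machine of M_b has working time below twice its capacity, then
T(σ) ≤ (3/2)·T(σ'). -/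
theorem stmt3 {α β : Type*} [DecidableEq β] (J : Finset α) (Ma Mb M : Finset β)
    (hJ : J.Nonempty) (hM : M.Nonempty)
    (hpart : Ma ∪ Mb = M) (hdisj : Disjoint Ma Mb)
    (p : α → ℝ) (c : β → ℝ)
    (hp : ∀ j ∈ J, 0 < p j) (hc : ∀ i ∈ M, 0 < c i)
    (σ σ' : α → β) (hσ : ∀ j ∈ J, σ j ∈ M) (hσ' : ∀ j ∈ J, σ' j ∈ M)
    (hagree : ∀ i ∈ Ma, J.filter (fun j => σ j = i) = J.filter (fun j => σ' j = i))
    (hunder : ∀ i ∈ Mb,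
      max (∑ j ∈ J.filter (fun j => σ j = i), p j) (c i) < 2 * c i) :
    totalTime J M σ p c ≤ (3 / 2) * totalTime J M σ' p c := by
  classical
  set l : β → ℝ := fun i => ∑ j ∈ J.filter (fun j => σ j = i), p j with hl
  set l' : β → ℝ := fun i => ∑ j ∈ J.filter (fun j => σ' j = i), p j with hl'
  have hl0 : ∀ i, 0 ≤ l i := fun i =>
    Finset.sum_nonneg fun j hj => (hp j (Finset.mem_filter.mp hj).1).le
  have hl'0 : ∀ i, 0 ≤ l' i := fun i =>
    Finset.sum_nonneg fun j hj => (hp j (Finset.mem_filter.mp hj).1).le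
  have hMaM : Ma ⊆ M := hpart ▸ Finset.subset_union_left
  have hMbM : Mb ⊆ M := hpart ▸ Finset.subset_union_right
  -- agreement of loads on Ma
  have hla : ∀ i ∈ Ma, l i = l' i := fun i hi => by
    simp only [hl, hl', hagree i hi]
  -- total loads over Mb agree
  have h1 : ∑ i ∈ M, l i = ∑ j ∈ J, p j := Finset.sum_fiberwise_of_maps_to hσ p
  have h2 : ∑ i ∈ M, l' i = ∑ j ∈ J, p j := Finset.sum_fiberwise_of_maps_to hσ' p
  have hsplitl : ∑ i ∈ Ma, l i + ∑ i ∈ Mb, l i = ∑ i ∈ M, l i := by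
    rw [← Finset.sum_union hdisj, hpart]
  have hsplitl' : ∑ i ∈ Ma, l' i + ∑ i ∈ Mb, l' i = ∑ i ∈ M, l' i := by
    rw [← Finset.sum_union hdisj, hpart]
  have hsumb : ∑ i ∈ Mb, l i = ∑ i ∈ Mb, l' i := by
    have ha : ∑ i ∈ Ma, l i = ∑ i ∈ Ma, l' i := Finset.sum_congr rfl hla
    have := hsplitl.trans (h1.trans h2.symm)
    linarith [hsplitl']
  -- abbreviations
  set A' : ℝ := ∑ i ∈ Ma, max (l' i) (c i) with hA'
  set B' : ℝ := ∑ i ∈ Mb, max (l' i) (c i) with hB'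
  have hA'0 : 0 ≤ A' := Finset.sum_nonneg fun i hi =>
    le_trans (hc i (hMaM hi)).le (le_max_right _ _)
  have hcB : ∑ i ∈ Mb, c i ≤ B' :=
    Finset.sum_le_sum fun i _ => le_max_right _ _
  have hlB : ∑ i ∈ Mb, l' i ≤ B' :=
    Finset.sum_le_sum fun i _ => le_max_left _ _
  -- split totalTime σ
  have hTσ : totalTime J M σ p c
      = ∑ i ∈ Ma, max (l i) (c i) + ∑ i ∈ Mb, max (l i) (c i) := by
    rw [totalTime, ← hpart, Finset.sum_union hdisj]
  have hTσ' : totalTime J M σ' p c = A' + B' := by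
    rw [totalTime, ← hpart, Finset.sum_union hdisj]
  -- on Ma, the terms agree
  have hMaEq : ∑ i ∈ Ma, max (l i) (c i) = A' :=
    Finset.sum_congr rfl fun i hi => by rw [hla i hi]
  -- on Mb, max (l i) (c i) ≤ c i + l i / 2
  have hMbLe : ∑ i ∈ Mb, max (l i) (c i) ≤ ∑ i ∈ Mb, (c i + l i / 2) := by
    refine Finset.sum_le_sum fun i hi => ?_
    have h2c := hunder i hi
    have hlc : l i < 2 * c i := lt_of_le_of_lt (le_max_left _ _) h2c
    have := hl0 i
    exact max_le (by linarith) (by linarith)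
  have hsum2 : ∑ i ∈ Mb, (c i + l i / 2)
      = ∑ i ∈ Mb, c i + (∑ i ∈ Mb, l' i) / 2 := by
    rw [Finset.sum_add_distrib, ← hsumb, ← Finset.sum_div]
  rw [hTσ, hTσ', hMaEq]
  have : ∑ i ∈ Mb, max (l i) (c i) ≤ B' + B' / 2 := by
    calc ∑ i ∈ Mb, max (l i) (c i) ≤ ∑ i ∈ Mb, (c i + l i / 2) := hMbLe
      _ = ∑ i ∈ Mb, c i + (∑ i ∈ Mb, l' i) / 2 := hsum2
      _ ≤ B' + B' / 2 := by linarith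
  linarith
end

section
/- Let (J, M, p, c) be a BAF instance with |M| ≥ 2. Suppose i* ∈ M has maximum capacity (c_{i*} ≥ c_i for all i ∈ M) and j* ∈ J has maximum processing time (p_{j*} ≥ p_j for all j ∈ J), and suppose p_{j*} ≥ c_{i*}. Then for every schedule σ' there exists a schedule σ'' with T(σ'') ≤ T(σ') and σ''⁻¹(i*) = {j*}, i.e., assigning exactly the single largest job to the largest-capacity machine never increases the total working time. -/
open Finset

/-- Exchange property (base step of Lemma 3.2): if the largest job is at least
as long as the largest capacity, then assigning exactly that job alone to the
largest-capacity machine never increases the total working time. -/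
theorem stmt4 {α β : Type*} [DecidableEq α] [DecidableEq β]
    (J : Finset α) (M : Finset β)
    (hJ : J.Nonempty) (hM : 2 ≤ M.card)
    (p : α → ℝ) (c : β → ℝ)
    (hp : ∀ j ∈ J, 0 < p j) (hc : ∀ i ∈ M, 0 < c i)
    (istar : β) (histar : istar ∈ M) (jstar : α) (hjstar : jstar ∈ J)
    (hcmax : ∀ i ∈ M, c i ≤ c istar) (hpmax : ∀ j ∈ J, p j ≤ p jstar)
    (hpc : c istar ≤ p jstar)
    (σ' : α → β) (hσ' : ∀ j ∈ J, σ' j ∈ M) :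
    ∃ σ'' : α → β, (∀ j ∈ J, σ'' j ∈ M) ∧
      totalTime J M σ'' p c ≤ totalTime J M σ' p c ∧
      J.filter (fun j => σ'' j = istar) = {jstar} := by
  -- choose a second machine i₀ ≠ istar such that σ' jstar ∈ {istar, i₀}
  obtain ⟨i₀, hi₀M, hi₀ne, hjs⟩ :
      ∃ i₀ ∈ M, i₀ ≠ istar ∧ (σ' jstar = istar ∨ σ' jstar = i₀) := by
    by_cases h : σ' jstar = istar
    · obtain ⟨i₀, h1, h2⟩ := Finset.exists_mem_ne (show 1 < M.card by omega) istar
      exact ⟨i₀, h1, h2, Or.inl h⟩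
    · exact ⟨σ' jstar, hσ' _ hjstar, h, Or.inr rfl⟩
  set σ'' : α → β := fun j => if j = jstar then istar else if σ' j = istar then i₀ else σ' j
    with hσ''def
  have hmem : ∀ j ∈ J, σ'' j ∈ M := by
    intro j hj
    simp only [hσ''def]
    split
    · exact histar
    · split
      · exact hi₀M
      · exact hσ' j hj
  -- the new istar-fiber is exactly {jstar}
  have hfib : J.filter (fun j => σ'' j = istar) = {jstar} := by
    ext j
    simp only [mem_filter, mem_singleton, hσ''def]
    constructor
    · rintro ⟨hj, h⟩
      by_contra hne
      simp only [hne, if_neg, if_false] at h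
      split at h
      · exact hi₀ne h
      · exact ‹¬ σ' j = istar› h
    · rintro rfl
      simp [hjstar]
  refine ⟨σ'', hmem, ?_, hfib⟩
  -- loads
  set L : β → ℝ := fun i => ∑ j ∈ J.filter (fun j => σ' j = i), p j with hL
  set L'' : β → ℝ := fun i => ∑ j ∈ J.filter (fun j => σ'' j = i), p j with hL''
  have hLnonneg : ∀ i, 0 ≤ L i := by
    intro i
    exact Finset.sum_nonneg fun j hj => (hp j (mem_filter.mp hj).1).le
  -- jstar contributes to the load of σ' jstar
  have hpL : p jstar ≤ L (σ' jstar) := by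
    apply Finset.single_le_sum (f := p) (fun j hj => (hp j (mem_filter.mp hj).1).le)
    exact mem_filter.mpr ⟨hjstar, rfl⟩
  -- new load of istar is p jstar
  have hListar : L'' istar = p jstar := by
    simp only [hL'', hfib, Finset.sum_singleton]
  -- new load of i₀
  have hfib0 : J.filter (fun j => σ'' j = i₀) =
      ((J.filter (fun j => σ' j = istar)) ∪ (J.filter (fun j => σ' j = i₀))).erase jstar := by
    ext j
    simp only [mem_filter, mem_erase, mem_union, hσ''def]
    constructor
    · rintro ⟨hj, h⟩
      have hne : j ≠ jstar := by
        rintro rfl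
        simp only [if_pos rfl] at h
        exact hi₀ne h.symm
      rw [if_neg hne] at h
      refine ⟨hne, ?_⟩
      by_cases h' : σ' j = istar
      · exact Or.inl ⟨hj, h'⟩
      · rw [if_neg h'] at h
        exact Or.inr ⟨hj, h⟩
    · rintro ⟨hne, h | h⟩
      · exact ⟨h.1, by rw [if_neg hne, if_pos h.2]⟩
      · refine ⟨h.1, ?_⟩
        rw [if_neg hne]
        by_cases h' : σ' j = istar
        · rw [if_pos h']
        · rw [if_neg h']
          exact h.2
  have hdisj : Disjoint (J.filter (fun j => σ' j = istar)) (J.filter (fun j => σ' j = i₀)) := by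
    rw [Finset.disjoint_left]
    intro j h1 h2
    exact hi₀ne (((mem_filter.mp h2).2).symm.trans (mem_filter.mp h1).2)
  have hjmem : jstar ∈ (J.filter (fun j => σ' j = istar)) ∪ (J.filter (fun j => σ' j = i₀)) := by
    rcases hjs with h | h
    · exact Finset.mem_union_left _ (mem_filter.mpr ⟨hjstar, h⟩)
    · exact Finset.mem_union_right _ (mem_filter.mpr ⟨hjstar, h⟩)
  have hLi₀ : L'' i₀ = L istar + L i₀ - p jstar := by
    have := Finset.sum_erase_add
      ((J.filter (fun j => σ' j = istar)) ∪ (J.filter (fun j => σ' j = i₀))) p hjmem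
    rw [Finset.sum_union hdisj] at this
    simp only [hL'', hfib0, hL]
    linarith
  -- other loads unchanged
  have hLother : ∀ i, i ≠ istar → i ≠ i₀ → L'' i = L i := by
    intro i h1 h2
    simp only [hL'', hL]
    congr 1
    apply Finset.filter_congr
    intro j hj
    simp only [hσ''def]
    constructor
    · intro h
      by_cases hne : j = jstar
      · rw [if_pos hne] at h
        exact absurd h h1.symm
      · rw [if_neg hne] at h
        by_cases h' : σ' j = istar
        · rw [if_pos h'] at h
          exact absurd h h2.symm
        · rwa [if_neg h'] at h
    · intro h
      have hne : j ≠ jstar := by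
        rintro rfl
        rcases hjs with h' | h'
        · exact h1 (h'.symm.trans h).symm
        · exact h2 (h'.symm.trans h).symm
      rw [if_neg hne, if_neg (fun hh => h1 (h.symm.trans hh))]
      exact h
  -- sum decomposition
  have hi₀e : i₀ ∈ M.erase istar := Finset.mem_erase.mpr ⟨hi₀ne, hi₀M⟩
  have hsplit : ∀ f : β → ℝ, ∑ i ∈ M, f i = f istar + f i₀ + ∑ i ∈ (M.erase istar).erase i₀, f i := by
    intro f
    rw [← Finset.add_sum_erase M f histar, ← Finset.add_sum_erase (M.erase istar) f hi₀e]
    ring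
  unfold totalTime
  rw [hsplit, hsplit]
  have hrest : ∑ i ∈ (M.erase istar).erase i₀, max (L'' i) (c i)
      = ∑ i ∈ (M.erase istar).erase i₀, max (L i) (c i) := by
    apply Finset.sum_congr rfl
    intro i hi
    have h2 := (Finset.mem_erase.mp hi).1
    have h1 := (Finset.mem_erase.mp (Finset.mem_erase.mp hi).2).1
    rw [hLother i h1 h2]
  show max (L'' istar) (c istar) + max (L'' i₀) (c i₀) + _ ≤
    max (L istar) (c istar) + max (L i₀) (c i₀) + _
  rw [hrest]
  have key : max (L'' istar) (c istar) + max (L'' i₀) (c i₀)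
      ≤ max (L istar) (c istar) + max (L i₀) (c i₀) := by
    rw [hListar, hLi₀, max_eq_left hpc]
    have hci₀ : c i₀ ≤ c istar := hcmax _ hi₀M
    rcases hjs with h | h
    · have : p jstar ≤ L istar := h ▸ hpL
      have h1 : L istar ≤ max (L istar) (c istar) := le_max_left _ _
      have h2 : L i₀ ≤ max (L i₀) (c i₀) := le_max_left _ _
      have h3 : c i₀ ≤ max (L i₀) (c i₀) := le_max_right _ _
      rcases max_cases (L istar + L i₀ - p jstar) (c i₀) with ⟨he, _⟩ | ⟨he, _⟩ <;> rw [he] <;> linarith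
    · have : p jstar ≤ L i₀ := h ▸ hpL
      have h1 : L istar ≤ max (L istar) (c istar) := le_max_left _ _
      have h1' : c istar ≤ max (L istar) (c istar) := le_max_right _ _
      have h2 : L i₀ ≤ max (L i₀) (c i₀) := le_max_left _ _
      rcases max_cases (L istar + L i₀ - p jstar) (c i₀) with ⟨he, _⟩ | ⟨he, _⟩ <;> rw [he] <;> linarith
  linarith
end

section
/- Let (J, M, p, c) be a BAF instance, ε ≥ 0, and p̂ : J → ℝ with 0 < p̂_j ≤ p_j ≤ (1+ε)·p̂_j for every j ∈ J. If σ̂ is a schedule that is optimal for the rounded instance (J, M, p̂, c), i.e., T_{p̂}(σ̂) ≤ T_{p̂}(σ) for every schedule σ, then T_p(σ̂) ≤ (1+ε)·T_p(σ) for every schedule σ, where T_p and T_{p̂} denote the total working time with respect to processing times p and p̂, respectively. -/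
open Finset

/-- Lemma 4.2: a schedule that is optimal for the rounded-down processing
times p̂ is a (1+ε)-approximation for the original processing times p. -/
theorem stmt9 {α β : Type*} [DecidableEq β] (J : Finset α) (M : Finset β)
    (hJ : J.Nonempty) (hM : M.Nonempty)
    (p phat : α → ℝ) (c : β → ℝ)
    (hc : ∀ i ∈ M, 0 < c i) (ε : ℝ) (hε : 0 ≤ ε)
    (hround : ∀ j ∈ J, 0 < phat j ∧ phat j ≤ p j ∧ p j ≤ (1 + ε) * phat j)
    (σhat : α → β) (hσhat : ∀ j ∈ J, σhat j ∈ M)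
    (hopt : ∀ σ : α → β, (∀ j ∈ J, σ j ∈ M) →
      totalTime J M σhat phat c ≤ totalTime J M σ phat c) :
    ∀ σ : α → β, (∀ j ∈ J, σ j ∈ M) →
      totalTime J M σhat p c ≤ (1 + ε) * totalTime J M σ p c := by
  intro σ hσ
  have hε1 : (1:ℝ) ≤ 1 + ε := by linarith
  -- Step 1: T_p(σ̂) ≤ (1+ε) T_{p̂}(σ̂)
  have h1 : totalTime J M σhat p c ≤ (1 + ε) * totalTime J M σhat phat c := by
    unfold totalTime
    rw [Finset.mul_sum]
    apply Finset.sum_le_sum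
    intro i hi
    have hload : ∑ j ∈ J.filter (fun j => σhat j = i), p j ≤
        (1 + ε) * ∑ j ∈ J.filter (fun j => σhat j = i), phat j := by
      rw [Finset.mul_sum]
      apply Finset.sum_le_sum
      intro j hj
      exact (hround j (Finset.mem_filter.mp hj).1).2.2
    have hcc : c i ≤ (1 + ε) * c i := by
      nlinarith [hc i hi]
    rw [max_le_iff]
    constructor
    · exact hload.trans (by
        apply mul_le_mul_of_nonneg_left (le_max_left _ _) (by linarith))
    · exact hcc.trans (mul_le_mul_of_nonneg_left (le_max_right _ _) (by linarith))
  -- Step 2: T_{p̂}(σ) ≤ T_p(σ)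
  have h2 : totalTime J M σ phat c ≤ totalTime J M σ p c := by
    unfold totalTime
    apply Finset.sum_le_sum
    intro i _
    apply max_le_max _ le_rfl
    apply Finset.sum_le_sum
    intro j hj
    exact (hround j (Finset.mem_filter.mp hj).1).2.1
  calc totalTime J M σhat p c ≤ (1 + ε) * totalTime J M σhat phat c := h1
    _ ≤ (1 + ε) * totalTime J M σ phat c := by
        apply mul_le_mul_of_nonneg_left (hopt σ hσ) (by linarith)
    _ ≤ (1 + ε) * totalTime J M σ p c := by
        apply mul_le_mul_of_nonneg_left h2 (by linarith)
end

section
/- Let M be a finite set, f : M → ℝ with f(q) ≥ 0 for all q, let ε be a real with 0 < ε < 1, and let K ≥ 1 and t ≥ 0 be integers. For each integer i ≥ 0 define M*_i := {q ∈ M : f(q) ≥ ε^{iK+t}}. Then Σ_{i ≥ 0} ε^{iK+t+1}·|M*_i| ≤ (ε/(1 − ε^K))·Σ_{q ∈ M} f(q). -/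
open Finset

/-- The level-set summation at the heart of Lemma 4.3: summing the
per-iteration error terms ε^{iK+t+1}·|M*_i| over all iterations i ≥ 0, where
M*_i is the set of machines q with f(q) ≥ ε^{iK+t}, yields at most
ε/(1 − ε^K) times the total Σ_q f(q). -/
theorem stmt15 {β : Type*} (M : Finset β) (f : β → ℝ)
    (hf : ∀ q ∈ M, 0 ≤ f q)
    (ε : ℝ) (hε0 : 0 < ε) (hε1 : ε < 1)
    (K t : ℕ) (hK : 1 ≤ K) :
    ∑' i : ℕ, ε ^ (i * K + t + 1) *
        ((M.filter (fun q => ε ^ (i * K + t) ≤ f q)).card : ℝ)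
      ≤ ε / (1 - ε ^ K) * ∑ q ∈ M, f q := by
  have hεK : ε ^ K < 1 := pow_lt_one₀ hε0.le hε1 (by omega)
  have hεK0 : (0:ℝ) ≤ ε ^ K := pow_nonneg hε0.le K
  have h1K : (0:ℝ) < 1 - ε ^ K := by linarith
  have hgeo : Summable (fun i : ℕ => (ε ^ K) ^ i) :=
    summable_geometric_of_lt_one hεK0 hεK
  set g : ℕ → β → ℝ := fun i q => if ε ^ (i * K + t) ≤ f q then ε ^ (i * K + t + 1) else 0
    with hgdef
  have hpow : ∀ i : ℕ, ε ^ (i * K + t + 1) = ε ^ (t + 1) * (ε ^ K) ^ i := by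
    intro i
    rw [← pow_mul, ← pow_add]
    congr 1
    ring
  have hgle : ∀ i q, g i q ≤ ε ^ (t + 1) * (ε ^ K) ^ i := by
    intro i q
    simp only [hgdef]
    split
    · exact le_of_eq (hpow i)
    · positivity
  have hgnn : ∀ i q, 0 ≤ g i q := by
    intro i q
    simp only [hgdef]
    split
    · positivity
    · exact le_refl 0
  have hSg : ∀ q, Summable (fun i => g i q) := by
    intro q
    refine Summable.of_nonneg_of_le (fun i => hgnn i q) (fun i => hgle i q) ?_
    exact (hgeo.mul_left _)
  -- rewrite LHS
  have hLHS : (∑' i : ℕ, ε ^ (i * K + t + 1) *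
        ((M.filter (fun q => ε ^ (i * K + t) ≤ f q)).card : ℝ))
      = ∑ q ∈ M, ∑' i : ℕ, g i q := by
    rw [← Summable.tsum_finsetSum (fun q _ => hSg q)]
    refine tsum_congr fun i => ?_
    rw [Finset.card_filter]
    push_cast
    rw [Finset.mul_sum]
    refine Finset.sum_congr rfl fun q _ => ?_
    simp only [hgdef, mul_ite, mul_one, mul_zero]
  rw [hLHS, Finset.mul_sum]
  refine Finset.sum_le_sum fun q hq => ?_
  -- per q bound
  by_cases hS : ∃ i : ℕ, ε ^ (i * K + t) ≤ f q
  · set i0 := Nat.find hS with hi0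
    have hPi0 : ε ^ (i0 * K + t) ≤ f q := Nat.find_spec hS
    have hzero : ∀ i ∈ Finset.range i0, g i q = 0 := by
      intro i hi
      simp only [hgdef, if_neg (Nat.find_min hS (Finset.mem_range.mp hi))]
    have hsum_shift : Summable (fun i : ℕ => g (i + i0) q) :=
      (hSg q).comp_injective (add_left_injective i0)
    have hsplit := Summable.sum_add_tsum_nat_add' (f := fun i => g i q) (k := i0) hsum_shift
    have hbound : ∀ i : ℕ, g (i + i0) q ≤ (ε * f q) * (ε ^ K) ^ i := by
      intro i
      have hfq : 0 ≤ f q := hf q hq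
      have : ε ^ ((i + i0) * K + t + 1) = (ε * ε ^ (i0 * K + t)) * (ε ^ K) ^ i := by
        rw [← pow_mul, show ε * ε ^ (i0 * K + t) = ε ^ (i0 * K + t + 1) from
          (pow_succ' ε _).symm, ← pow_add]
        congr 1
        ring
      simp only [hgdef]
      split
      · rw [this]
        gcongr
      · positivity
    have hsum2 : (∑' i : ℕ, g (i + i0) q) ≤ (ε * f q) / (1 - ε ^ K) := by
      calc (∑' i : ℕ, g (i + i0) q) ≤ ∑' i : ℕ, (ε * f q) * (ε ^ K) ^ i := by
            refine Summable.tsum_le_tsum hbound hsum_shift ?_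
            exact hgeo.mul_left _
        _ = (ε * f q) * (1 - ε ^ K)⁻¹ := by
            rw [tsum_mul_left, tsum_geometric_of_lt_one hεK0 hεK]
        _ = (ε * f q) / (1 - ε ^ K) := by rw [div_eq_mul_inv]
    have : (∑' i : ℕ, g i q) = ∑' i : ℕ, g (i + i0) q := by
      rw [← hsplit, Finset.sum_eq_zero hzero, zero_add]
    rw [this]
    calc (∑' i : ℕ, g (i + i0) q) ≤ (ε * f q) / (1 - ε ^ K) := hsum2
      _ = ε / (1 - ε ^ K) * f q := by ring
  · have : ∀ i : ℕ, g i q = 0 := by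
      intro i
      simp only [hgdef, if_neg (fun h => hS ⟨i, h⟩)]
    simp only [this, tsum_zero]
    have hfq : 0 ≤ f q := hf q hq
    positivity
end

section
/- Let M and J be disjoint finite nonempty sets of F-shaped jobs, where each i ∈ M has height 2 with processing times 0 < p(i,1) ≤ p(i,2), and each j ∈ J has height 1 with processing time p_j > 0. Then for every assignment σ : J → M there exists a feasible schedule τ : M ∪ J → ℝ_{≥0} of these F-shaped jobs (feasible meaning: for every layer ℓ ∈ {1,2} and every pair of distinct jobs B, B' of heights ≥ ℓ, either τ(B') + p(B',ℓ) ≤ τ(B) or τ(B) + p(B,ℓ) ≤ τ(B')) whose makespan max_B (τ(B) + p(B, h(B))) is at most Σ_{i ∈ M} max{ p(i,2), p(i,1) + Σ_{j ∈ σ⁻¹(i)} p_j }. -/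
open Finset

namespace Stmt18Aux

variable {α : Type*} [DecidableEq α]

/-- Block length of a height-2 job `i`. -/
noncomputable def LB (J : Finset α) (p1 p2 pJ : α → ℝ) (σ : α → α) (i : α) : ℝ :=
  max (p2 i) (p1 i + ∑ j ∈ J.filter (fun j => σ j = i), pJ j)

/-- Start time of the block of a height-2 job `i`. -/
noncomputable def SB (M J : Finset α) (p1 p2 pJ : α → ℝ) (σ : α → α) (r : α → ℕ) (i : α) : ℝ :=
  ∑ i' ∈ M.filter (fun i' => r i' < r i), LB J p1 p2 pJ σ i'

/-- The schedule. -/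
noncomputable def TAU (M J : Finset α) (p1 p2 pJ : α → ℝ) (σ : α → α) (r : α → ℕ) (b : α) : ℝ :=
  if b ∈ M then SB M J p1 p2 pJ σ r b
  else SB M J p1 p2 pJ σ r (σ b) + p1 (σ b) +
    ∑ j' ∈ J.filter (fun j' => σ j' = σ b ∧ r j' < r b), pJ j'

end Stmt18Aux

/-- Converting a BAF-style assignment into a feasible mixed-criticality
schedule with two criticality levels: the elements of `M` are height-2
F-shaped jobs with layer processing times `p1 ≤ p2`, the elements of `J` are
height-1 jobs with processing times `pJ`, and any assignment `σ : J → M`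
yields a feasible schedule `τ` whose makespan is at most
`Σ_{i ∈ M} max (p2 i) (p1 i + Σ_{j ∈ σ⁻¹(i)} pJ j)`. -/
theorem stmt18 {α : Type*} [DecidableEq α] (M J : Finset α)
    (hM : M.Nonempty) (hJ : J.Nonempty) (hdisj : Disjoint M J)
    (p1 p2 : α → ℝ) (pJ : α → ℝ)
    (hM2 : ∀ i ∈ M, 0 < p1 i ∧ p1 i ≤ p2 i)
    (hJ1 : ∀ j ∈ J, 0 < pJ j)
    (σ : α → α) (hσ : ∀ j ∈ J, σ j ∈ M) :
    ∃ τ : α → ℝ,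
      (∀ b ∈ M ∪ J, 0 ≤ τ b) ∧
      -- layer-1 disjointness: every pair of distinct jobs (all have height ≥ 1)
      (∀ b ∈ M ∪ J, ∀ b' ∈ M ∪ J, b ≠ b' →
        τ b' + (if b' ∈ M then p1 b' else pJ b') ≤ τ b ∨
        τ b + (if b ∈ M then p1 b else pJ b) ≤ τ b') ∧
      -- layer-2 disjointness: every pair of distinct height-2 jobs
      (∀ b ∈ M, ∀ b' ∈ M, b ≠ b' →
        τ b' + p2 b' ≤ τ b ∨ τ b + p2 b ≤ τ b') ∧
      -- makespan bound
      (∀ b ∈ M ∪ J, τ b + (if b ∈ M then p2 b else pJ b)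
        ≤ ∑ i ∈ M, max (p2 i) (p1 i + ∑ j ∈ J.filter (fun j => σ j = i), pJ j)) := by
  classical
  -- a ranking on all jobs, injective on `M ∪ J`
  set r : α → ℕ := fun b => (M ∪ J).toList.idxOf b with hr_def
  set L : α → ℝ := Stmt18Aux.LB J p1 p2 pJ σ with hLdef
  set S : α → ℝ := Stmt18Aux.SB M J p1 p2 pJ σ r with hSdef
  set τ : α → ℝ := Stmt18Aux.TAU M J p1 p2 pJ σ r with hτdef
  have hJM : ∀ j ∈ J, j ∉ M := fun j hj => Finset.disjoint_right.mp hdisj hj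
  have hr_inj : ∀ b ∈ M ∪ J, ∀ b' ∈ M ∪ J, r b = r b' → b = b' := by
    intro b hb b' hb' h
    exact (List.idxOf_inj (Finset.mem_toList.mpr hb)).mp h
  -- basic facts about L
  have hL_eq : ∀ i, L i = max (p2 i) (p1 i + ∑ j ∈ J.filter (fun j => σ j = i), pJ j) :=
    fun i => rfl
  have hsum_nonneg : ∀ s : Finset α, s ⊆ J → 0 ≤ ∑ j ∈ s, pJ j := by
    intro s hs
    exact Finset.sum_nonneg fun j hj => (hJ1 j (hs hj)).le
  have hL_ge_p2 : ∀ i, p2 i ≤ L i := fun i => le_max_left _ _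
  have hL_ge_p1sum : ∀ i, p1 i + ∑ j ∈ J.filter (fun j => σ j = i), pJ j ≤ L i :=
    fun i => le_max_right _ _
  have hL_ge_p1 : ∀ i ∈ M, p1 i ≤ L i := by
    intro i hi
    have := hsum_nonneg (J.filter (fun j => σ j = i)) (Finset.filter_subset _ _)
    linarith [hL_ge_p1sum i]
  have hL_nonneg : ∀ i ∈ M, 0 ≤ L i := by
    intro i hi
    exact le_trans (hM2 i hi).1.le (hL_ge_p1 i hi)
  -- basic facts about S
  have hS_eq : ∀ i, S i = ∑ i' ∈ M.filter (fun i' => r i' < r i), L i' := fun i => rfl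
  have hS_nonneg : ∀ i, 0 ≤ S i := by
    intro i
    rw [hS_eq]
    exact Finset.sum_nonneg fun i' hi' => hL_nonneg i' (Finset.mem_filter.mp hi').1
  have hS_mono : ∀ i ∈ M, ∀ i', r i < r i' → S i + L i ≤ S i' := by
    intro i hi i' hlt
    rw [hS_eq, hS_eq]
    have hni : i ∉ M.filter (fun i'' => r i'' < r i) := by
      simp [Finset.mem_filter]
    rw [add_comm, ← Finset.sum_insert hni]
    apply Finset.sum_le_sum_of_subset_of_nonneg
    · intro x hx
      rcases Finset.mem_insert.mp hx with rfl | hx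
      · exact Finset.mem_filter.mpr ⟨hi, hlt⟩
      · have := Finset.mem_filter.mp hx
        exact Finset.mem_filter.mpr ⟨this.1, this.2.trans hlt⟩
    · intro x hx _
      exact hL_nonneg x (Finset.mem_filter.mp hx).1
  have hSL_total : ∀ i ∈ M, S i + L i ≤ ∑ i' ∈ M, L i' := by
    intro i hi
    rw [hS_eq]
    have hni : i ∉ M.filter (fun i'' => r i'' < r i) := by
      simp [Finset.mem_filter]
    rw [add_comm, ← Finset.sum_insert hni]
    apply Finset.sum_le_sum_of_subset_of_nonneg
    · intro x hx
      rcases Finset.mem_insert.mp hx with rfl | hx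
      · exact hi
      · exact (Finset.mem_filter.mp hx).1
    · intro x hx _
      exact hL_nonneg x hx
  -- unfolding τ
  have hτM : ∀ i, i ∈ M → τ i = S i := by
    intro i hi
    simp only [hτdef, hSdef, Stmt18Aux.TAU, if_pos hi]
  have hτJ : ∀ j, j ∉ M → τ j = S (σ j) + p1 (σ j) +
      ∑ j' ∈ J.filter (fun j' => σ j' = σ j ∧ r j' < r j), pJ j' := by
    intro j hj
    simp only [hτdef, hSdef, Stmt18Aux.TAU, if_neg hj]
  -- lower bound on τ for J-jobs
  have hτJ_ge : ∀ j ∈ J, S (σ j) + p1 (σ j) ≤ τ j := by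
    intro j hj
    rw [hτJ j (hJM j hj)]
    have := hsum_nonneg (J.filter (fun j' => σ j' = σ j ∧ r j' < r j))
      (Finset.filter_subset _ _)
    linarith
  -- end of layer-2 execution is within the block
  have hend2 : ∀ b ∈ M ∪ J, τ b + (if b ∈ M then p2 b else pJ b) ≤
      S (if b ∈ M then b else σ b) + L (if b ∈ M then b else σ b) := by
    intro b hb
    by_cases hbM : b ∈ M
    · rw [if_pos hbM, if_pos hbM, hτM b hbM]
      linarith [hL_ge_p2 b]
    · have hbJ : b ∈ J := (Finset.mem_union.mp hb).resolve_left hbM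
      rw [if_neg hbM, if_neg hbM, hτJ b hbM]
      have hnb : b ∉ J.filter (fun j' => σ j' = σ b ∧ r j' < r b) := by
        simp [Finset.mem_filter]
      have hsub : insert b (J.filter (fun j' => σ j' = σ b ∧ r j' < r b)) ⊆
          J.filter (fun j => σ j = σ b) := by
        intro x hx
        rcases Finset.mem_insert.mp hx with rfl | hx
        · exact Finset.mem_filter.mpr ⟨hbJ, rfl⟩
        · have := Finset.mem_filter.mp hx
          exact Finset.mem_filter.mpr ⟨this.1, this.2.1⟩
      have h1 : (∑ j' ∈ J.filter (fun j' => σ j' = σ b ∧ r j' < r b), pJ j') + pJ b ≤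
          ∑ j ∈ J.filter (fun j => σ j = σ b), pJ j := by
        rw [add_comm, ← Finset.sum_insert hnb]
        apply Finset.sum_le_sum_of_subset_of_nonneg hsub
        intro x hx _
        exact (hJ1 x (Finset.mem_filter.mp hx).1).le
      linarith [hL_ge_p1sum (σ b)]
  -- end of layer-1 execution is within the block
  have hend1 : ∀ b ∈ M ∪ J, τ b + (if b ∈ M then p1 b else pJ b) ≤
      S (if b ∈ M then b else σ b) + L (if b ∈ M then b else σ b) := by
    intro b hb
    by_cases hbM : b ∈ M
    · rw [if_pos hbM, if_pos hbM, hτM b hbM]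
      linarith [hL_ge_p1 b hbM]
    · have := hend2 b hb
      rw [if_neg hbM] at this ⊢
      exact this
  -- τ is at least the block start
  have hτ_ge_S : ∀ b ∈ M ∪ J, S (if b ∈ M then b else σ b) ≤ τ b := by
    intro b hb
    by_cases hbM : b ∈ M
    · rw [if_pos hbM, hτM b hbM]
    · have hbJ : b ∈ J := (Finset.mem_union.mp hb).resolve_left hbM
      rw [if_neg hbM]
      have := hτJ_ge b hbJ
      have hp1 : 0 < p1 (σ b) := (hM2 (σ b) (hσ b hbJ)).1
      linarith
  -- the block of any job is in M
  have hblkM : ∀ b ∈ M ∪ J, (if b ∈ M then b else σ b) ∈ M := by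
    intro b hb
    by_cases hbM : b ∈ M
    · rwa [if_pos hbM]
    · rw [if_neg hbM]
      exact hσ b ((Finset.mem_union.mp hb).resolve_left hbM)
  -- cross-block separation at layer 1
  have hcross : ∀ b ∈ M ∪ J, ∀ b' ∈ M ∪ J,
      r (if b ∈ M then b else σ b) < r (if b' ∈ M then b' else σ b') →
      τ b + (if b ∈ M then p1 b else pJ b) ≤ τ b' := by
    intro b hb b' hb' hlt
    calc τ b + (if b ∈ M then p1 b else pJ b)
        ≤ S (if b ∈ M then b else σ b) + L (if b ∈ M then b else σ b) := hend1 b hb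
      _ ≤ S (if b' ∈ M then b' else σ b') := hS_mono _ (hblkM b hb) _ hlt
      _ ≤ τ b' := hτ_ge_S b' hb'
  -- same-block separation for two J-jobs
  have hsame : ∀ b ∈ J, ∀ b' ∈ J, σ b = σ b' → r b < r b' → τ b + pJ b ≤ τ b' := by
    intro b hb b' hb' hσe hlt
    rw [hτJ b (hJM b hb), hτJ b' (hJM b' hb'), ← hσe]
    have hnb : b ∉ J.filter (fun j' => σ j' = σ b ∧ r j' < r b) := by
      simp [Finset.mem_filter]
    have hsub : insert b (J.filter (fun j' => σ j' = σ b ∧ r j' < r b)) ⊆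
        J.filter (fun j' => σ j' = σ b ∧ r j' < r b') := by
      intro x hx
      rcases Finset.mem_insert.mp hx with rfl | hx
      · exact Finset.mem_filter.mpr ⟨hb, rfl, hlt⟩
      · have := Finset.mem_filter.mp hx
        exact Finset.mem_filter.mpr ⟨this.1, this.2.1, this.2.2.trans hlt⟩
    have h1 : (∑ j' ∈ J.filter (fun j' => σ j' = σ b ∧ r j' < r b), pJ j') + pJ b ≤
        ∑ j' ∈ J.filter (fun j' => σ j' = σ b ∧ r j' < r b'), pJ j' := by
      rw [add_comm, ← Finset.sum_insert hnb]
      apply Finset.sum_le_sum_of_subset_of_nonneg hsub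
      intro x hx _
      exact (hJ1 x (Finset.mem_filter.mp hx).1).le
    linarith
  refine ⟨τ, ?_, ?_, ?_, ?_⟩
  · -- nonnegativity
    intro b hb
    by_cases hbM : b ∈ M
    · rw [hτM b hbM]; exact hS_nonneg b
    · have hbJ : b ∈ J := (Finset.mem_union.mp hb).resolve_left hbM
      have := hτJ_ge b hbJ
      have hp1 : 0 < p1 (σ b) := (hM2 (σ b) (hσ b hbJ)).1
      have := hS_nonneg (σ b)
      linarith
  · -- layer-1 disjointness
    intro b hb b' hb' hne
    by_cases hblk : (if b ∈ M then b else σ b) = (if b' ∈ M then b' else σ b')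
    · -- same block
      by_cases hbM : b ∈ M <;> by_cases hb'M : b' ∈ M
      · exfalso
        rw [if_pos hbM, if_pos hb'M] at hblk
        exact hne hblk
      · -- b ∈ M, b' ∈ J, σ b' = b : b' goes after b
        rw [if_pos hbM, if_neg hb'M] at hblk
        have hb'J : b' ∈ J := (Finset.mem_union.mp hb').resolve_left hb'M
        right
        rw [if_pos hbM, hτM b hbM]
        have := hτJ_ge b' hb'J
        rw [← hblk] at this
        linarith
      · rw [if_neg hbM, if_pos hb'M] at hblk
        have hbJ : b ∈ J := (Finset.mem_union.mp hb).resolve_left hbM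
        left
        rw [if_pos hb'M, hτM b' hb'M]
        have := hτJ_ge b hbJ
        rw [hblk] at this
        linarith
      · -- both in J, same block
        rw [if_neg hbM, if_neg hb'M] at hblk
        have hbJ : b ∈ J := (Finset.mem_union.mp hb).resolve_left hbM
        have hb'J : b' ∈ J := (Finset.mem_union.mp hb').resolve_left hb'M
        have hrne : r b ≠ r b' := fun h => hne (hr_inj b hb b' hb' h)
        rcases hrne.lt_or_gt with h | h
        · right
          rw [if_neg hbM]
          exact hsame b hbJ b' hb'J hblk h
        · left
          rw [if_neg hb'M]
          exact hsame b' hb'J b hbJ hblk.symm h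
    · -- different blocks
      have h1 := hblkM b hb
      have h2 := hblkM b' hb'
      have hrne : r (if b ∈ M then b else σ b) ≠ r (if b' ∈ M then b' else σ b') :=
        fun h => hblk (hr_inj _ (Finset.mem_union_left _ h1) _ (Finset.mem_union_left _ h2) h)
      rcases hrne.lt_or_gt with h | h
      · right; exact hcross b hb b' hb' h
      · left; exact hcross b' hb' b hb h
  · -- layer-2 disjointness
    intro b hb b' hb' hne
    have hrne : r b ≠ r b' := fun h =>
      hne (hr_inj b (Finset.mem_union_left _ hb) b' (Finset.mem_union_left _ hb') h)
    rcases hrne.lt_or_gt with h | h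
    · right
      calc τ b + p2 b ≤ S b + L b := by rw [hτM b hb]; linarith [hL_ge_p2 b]
        _ ≤ S b' := hS_mono b hb b' h
        _ = τ b' := (hτM b' hb').symm
    · left
      calc τ b' + p2 b' ≤ S b' + L b' := by rw [hτM b' hb']; linarith [hL_ge_p2 b']
        _ ≤ S b := hS_mono b' hb' b h
        _ = τ b := (hτM b hb).symm
  · -- makespan bound
    intro b hb
    have hRHS : ∑ i ∈ M, max (p2 i) (p1 i + ∑ j ∈ J.filter (fun j => σ j = i), pJ j)
        = ∑ i ∈ M, L i := by
      apply Finset.sum_congr rfl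
      intro i _
      rw [hL_eq]
    rw [hRHS]
    calc τ b + (if b ∈ M then p2 b else pJ b)
        ≤ S (if b ∈ M then b else σ b) + L (if b ∈ M then b else σ b) := hend2 b hb
      _ ≤ ∑ i ∈ M, L i := hSL_total _ (hblkM b hb)
end
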